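/- arXiv:1811.03591 — 2 statements merged into one kernel-verified Lean document; each statement's English description precedes it below -/
import Mathlib

section
/- There exists a constant c > 0 such that for every sufficiently small ε > 0 the following holds: there exist a three-point set X ⊂ ℝ and a map f : X → ℝ with distortion at most 1 + ε such that for every m ≥ 1, every outer extension f' : ℝ → ℝ^m of f has distortion at least 1 + c/log²(1/ε). (One can take X = {−ε', 0, 1} and f(−ε') = ε', f(0) = 0, f(1) = 1 for a suitable ε' proportional to ε.) -/
/-- `f` restricted to `A ⊆ ℝ` (mapping into `ℝᵐ`) has distortion at most `D`. -/
def HasDistortionAtMost {m : ℕ} (A : Set ℝ) (f : ℝ → EuclideanSpace ℝ (Fin m)) (D : ℝ) : Prop :=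
  ∃ lam > (0 : ℝ), ∀ x ∈ A, ∀ y ∈ A,
    lam * |x - y| ≤ ‖f x - f y‖ ∧ ‖f x - f y‖ ≤ lam * D * |x - y|

/-- `f : A → ℝ` has distortion at most `D`. -/
def HasDistortionAtMost₁ (A : Set ℝ) (f : ℝ → ℝ) (D : ℝ) : Prop :=
  ∃ lam > (0 : ℝ), ∀ x ∈ A, ∀ y ∈ A,
    lam * |x - y| ≤ |f x - f y| ∧ |f x - f y| ≤ lam * D * |x - y|

/-!
Let `f'` be an extension of distortion `D` at scale `μ`, i.e.
`μ |x - y| ≤ ‖f' x - f' y‖ ≤ μ D |x - y|`. By Apollonius' theorem `f'` sends the midpoint of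
`[x, y]` to within `μ √(D² - 1) |x - y| / 2` of the midpoint of `f' x` and `f' y`; bisecting
`[0, 1]` `K` times puts `f' (2⁻ᴷ)` within `K μ √(D² - 1) 2⁻ᴷ` of `2⁻ᴷ • f' 1`. On
`X = {-2⁻ᴷ, 0, 1}` the map `f = |·|` folds `-2⁻ᴷ` onto `2⁻ᴷ`, so `f' (-2⁻ᴷ) = 2⁻ᴷ • f' 1`, while
`f' (±2⁻ᴷ)` are at least `2 μ 2⁻ᴷ` apart. Hence `K √(D² - 1) ≥ 2`, i.e. `D ≥ 1 + 1 / K²`, and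
choosing `2⁻ᴷ ≈ ε` makes `K ≲ log (1 / ε)`.
-/

theorem one_add_inv_sq_le_of_two_le_mul_sqrt {K : ℕ} {D : ℝ} (hD : 0 ≤ D)
    (h : 2 ≤ K * √(D ^ 2 - 1)) : 1 + 1 / (K : ℝ) ^ 2 ≤ D := by
  have hK : (1 : ℝ) ≤ K := by
    rcases K with _ | K
    · norm_num at h
    · exact_mod_cast Nat.succ_pos K
  have hsq : 4 ≤ (K : ℝ) ^ 2 * (D ^ 2 - 1) := by
    have hpos : 0 ≤ D ^ 2 - 1 := by
      by_contra! hneg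
      rw [Real.sqrt_eq_zero_of_nonpos hneg.le] at h
      linarith
    nlinarith [pow_le_pow_left₀ zero_le_two h 2, Real.sq_sqrt hpos]
  set a : ℝ := 1 / (K : ℝ) ^ 2
  have ha : 0 < a := by positivity
  have ha1 : a ≤ 1 := by rw [div_le_one (by positivity)]; nlinarith
  have hKa : (K : ℝ) ^ 2 * a = 1 := mul_one_div_cancel (by positivity)
  have hsq_le : (1 + a) ^ 2 ≤ D ^ 2 := by nlinarith
  exact (pow_le_pow_iff_left₀ (by positivity) hD two_ne_zero).mp hsq_le

section NearIsometry

variable {E : Type*} [NormedAddCommGroup E] [InnerProductSpace ℝ E] {g : ℝ → E} {μ D : ℝ}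

theorem dist_apply_midpoint_le (hμ : 0 ≤ μ)
    (hlow : ∀ x y, μ * dist x y ≤ dist (g x) (g y))
    (hup : ∀ x y, dist (g x) (g y) ≤ μ * D * dist x y) (x y : ℝ) :
    dist (g (midpoint ℝ x y)) (midpoint ℝ (g x) (g y)) ≤ μ * √(D ^ 2 - 1) * (dist x y / 2) := by
  have apollonius :=
    EuclideanGeometry.dist_sq_add_dist_sq_eq_two_mul_dist_midpoint_sq_add_half_dist_sq
      (g (midpoint ℝ x y)) (g x) (g y)
  have hx : dist (g (midpoint ℝ x y)) (g x) ≤ μ * D * (dist x y / 2) := by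
    simpa [dist_midpoint_left, div_eq_inv_mul] using hup (midpoint ℝ x y) x
  have hy : dist (g (midpoint ℝ x y)) (g y) ≤ μ * D * (dist x y / 2) := by
    simpa [dist_midpoint_right, div_eq_inv_mul] using hup (midpoint ℝ x y) y
  have hxy := pow_le_pow_left₀ (by positivity) (hlow x y) 2
  have hsq : dist (g (midpoint ℝ x y)) (midpoint ℝ (g x) (g y)) ^ 2
      ≤ (μ * (dist x y / 2)) ^ 2 * (D ^ 2 - 1) := by
    nlinarith [pow_le_pow_left₀ dist_nonneg hx 2, pow_le_pow_left₀ dist_nonneg hy 2]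
  calc _ ≤ √((μ * (dist x y / 2)) ^ 2 * (D ^ 2 - 1)) := Real.le_sqrt_of_sq_le hsq
    _ = _ := by
      rw [Real.sqrt_mul (sq_nonneg _), Real.sqrt_sq (by positivity)]
      ring

theorem dist_apply_div_two_pow_le (hμ : 0 ≤ μ)
    (hlow : ∀ x y, μ * dist x y ≤ dist (g x) (g y))
    (hup : ∀ x y, dist (g x) (g y) ≤ μ * D * dist x y) (hg0 : g 0 = 0) (t : ℝ) (k : ℕ) :
    dist (g (t / 2 ^ k)) ((2 ^ k : ℝ)⁻¹ • g t) ≤ k * (μ * √(D ^ 2 - 1) * |t|) / 2 ^ k := by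
  induction k with
  | zero => simp
  | succ k ih =>
    set s := t / 2 ^ k
    have hs : t / 2 ^ (k + 1) = midpoint ℝ 0 s := by
      rw [midpoint_eq_smul_add]
      simp only [s, pow_succ, invOf_eq_inv, zero_add, smul_eq_mul]
      ring
    have hgs : midpoint ℝ (g 0) (g s) = (2 : ℝ)⁻¹ • g s := by
      rw [hg0, midpoint_eq_smul_add]; simp
    have hmid := dist_apply_midpoint_le hμ hlow hup 0 s
    rw [hgs, dist_comm (0 : ℝ), Real.dist_0_eq_abs] at hmid
    calc dist (g (t / 2 ^ (k + 1))) ((2 ^ (k + 1) : ℝ)⁻¹ • g t)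
        ≤ dist (g (t / 2 ^ (k + 1))) ((2 : ℝ)⁻¹ • g s)
          + dist ((2 : ℝ)⁻¹ • g s) ((2 : ℝ)⁻¹ • (2 ^ k : ℝ)⁻¹ • g t) := by
          rw [smul_smul, ← mul_inv, ← pow_succ']
          exact dist_triangle _ _ _
      _ ≤ μ * √(D ^ 2 - 1) * (|s| / 2) + 2⁻¹ * (k * (μ * √(D ^ 2 - 1) * |t|) / 2 ^ k) := by
          rw [hs, dist_smul₀, Real.norm_of_nonneg (by norm_num)]
          gcongr
      _ = (k + 1 : ℕ) * (μ * √(D ^ 2 - 1) * |t|) / 2 ^ (k + 1) := by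
          simp only [s, abs_div, abs_pow, abs_two]
          push_cast
          ring

theorem one_add_inv_sq_le_of_apply_neg_eq_smul (hμ : 0 < μ)
    (hlow : ∀ x y, μ * dist x y ≤ dist (g x) (g y))
    (hup : ∀ x y, dist (g x) (g y) ≤ μ * D * dist x y) (hg0 : g 0 = 0) (K : ℕ)
    (hfold : g (-(2 ^ K : ℝ)⁻¹) = (2 ^ K : ℝ)⁻¹ • g 1) :
    1 + 1 / (K : ℝ) ^ 2 ≤ D := by
  set e : ℝ := (2 ^ K)⁻¹
  have he : 0 < e := by positivity
  have hD : 0 ≤ D := by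
    have := dist_nonneg.trans (hup 0 1)
    rw [dist_comm (0 : ℝ), Real.dist_0_eq_abs, abs_one, mul_one] at this
    exact nonneg_of_mul_nonneg_right this hμ
  have hnear := dist_apply_div_two_pow_le hμ.le hlow hup hg0 1 K
  rw [one_div, abs_one, mul_one, ← div_mul_eq_mul_div, div_eq_mul_inv] at hnear
  have hfar : μ * (2 * e) ≤ dist (g e) (e • g 1) := by
    have := hlow e (-e)
    rwa [hfold, Real.dist_eq, sub_neg_eq_add, ← two_mul, abs_of_pos (by positivity)] at this
  have hsqrt : 2 ≤ K * √(D ^ 2 - 1) := by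
    have : 2 * (μ * e) ≤ K * √(D ^ 2 - 1) * (μ * e) := by nlinarith
    exact le_of_mul_le_mul_right this (by positivity)
  exact one_add_inv_sq_le_of_two_le_mul_sqrt hD hsqrt

end NearIsometry

theorem exists_inv_two_pow_le_and_le_log {ε : ℝ} (hε : 0 < ε) (hε1 : ε ≤ 1) :
    ∃ K : ℕ, (2 ^ K : ℝ)⁻¹ ≤ ε / 4 ∧ (K : ℝ) ≤ 2 * Real.log (1 / ε) + 3 := by
  set n := ⌈Real.logb 2 (1 / ε)⌉₊
  have hinv : 1 ≤ 1 / ε := by rw [le_div_iff₀ hε]; linarith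
  have hL : 0 ≤ Real.log (1 / ε) := Real.log_nonneg hinv
  refine ⟨n + 2, ?_, ?_⟩
  · have hn : 1 / ε ≤ 2 ^ n := by
      calc 1 / ε = (2 : ℝ) ^ Real.logb 2 (1 / ε) :=
            (Real.rpow_logb two_pos (by norm_num) (by positivity)).symm
        _ ≤ (2 : ℝ) ^ (n : ℝ) := Real.rpow_le_rpow_of_exponent_le one_le_two (Nat.le_ceil _)
        _ = 2 ^ n := Real.rpow_natCast 2 n
    rw [pow_add, inv_le_iff_one_le_mul₀ (by positivity)]
    rw [div_le_iff₀ hε] at hn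
    nlinarith
  · have hn : (n : ℝ) < Real.logb 2 (1 / ε) + 1 :=
      Nat.ceil_lt_add_one (Real.logb_nonneg one_lt_two hinv)
    have hlogb : Real.logb 2 (1 / ε) ≤ 2 * Real.log (1 / ε) := by
      rw [Real.logb, div_le_iff₀ (Real.log_pos one_lt_two)]
      nlinarith [Real.log_two_gt_d9]
    push_cast
    linarith

theorem hasDistortionAtMost₁_abs_three_points {e ε : ℝ} (he : 0 < e) (hε : ε ≤ 2)
    (heε : e ≤ ε / 4) : HasDistortionAtMost₁ {-e, 0, 1} (fun x => |x|) (1 + ε) := by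
  have he1 : e < 1 := by linarith
  have hratio : ∀ x ∈ ({-e, 0, 1} : Set ℝ), ∀ y ∈ ({-e, 0, 1} : Set ℝ),
      (1 - e) * |x - y| ≤ (1 + e) * |(|x| - |y|)| := by
    intro x hx y hy
    simp only [Set.mem_insert_iff, Set.mem_singleton_iff] at hx hy
    rcases hx with rfl | rfl | rfl <;> rcases hy with rfl | rfl | rfl <;>
      norm_num [abs_of_pos he, abs_of_neg (by linarith : e - 1 < 0),
        abs_of_pos (by linarith : 0 < 1 - e), abs_of_neg (by linarith : -e - 1 < 0),
        abs_of_pos (by linarith : 0 < 1 + e)] <;> nlinarith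
  refine ⟨(1 - e) / (1 + e), div_pos (by linarith) (by linarith), fun x hx y hy => ⟨?_, ?_⟩⟩
  · rw [div_mul_eq_mul_div, div_le_iff₀ (by linarith), mul_comm _ (1 + e)]
    exact hratio x hx y hy
  · calc |(|x| - |y|)| ≤ |x - y| := abs_abs_sub_abs_le_abs_sub x y
      _ ≤ _ := by
        refine le_mul_of_one_le_left (abs_nonneg _) ?_
        rw [div_mul_eq_mul_div, le_div_iff₀ (by linarith)]
        nlinarith

theorem eq_smul_of_apply_eq_ite {ι : Type*} {p : ι → Prop} [DecidablePred p]
    {u v : EuclideanSpace ℝ ι} {a : ℝ} (hu : ∀ i, u i = if p i then a else 0)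
    (hv : ∀ i, v i = if p i then 1 else 0) : u = a • v := by
  ext i
  simp [hu, hv]

/-- There is a constant `c > 0` such that for every sufficiently small `ε > 0` there are a
three-point set `X ⊂ ℝ` and a map `f : X → ℝ` of distortion at most `1 + ε` such that every
outer extension `f' : ℝ → ℝᵐ` of `f` has distortion at least `1 + c / log² (1/ε)`. -/
theorem lower_bound_outer_extension_of_line_map :
    ∃ c > (0 : ℝ), ∃ ε₀ > (0 : ℝ), ∀ ε : ℝ, 0 < ε → ε < ε₀ →
      ∃ (X : Set ℝ) (f : ℝ → ℝ), X.Finite ∧ X.ncard = 3 ∧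
        HasDistortionAtMost₁ X f (1 + ε) ∧
        ∀ m : ℕ, 1 ≤ m → ∀ f' : ℝ → EuclideanSpace ℝ (Fin m),
          (∀ x ∈ X, ∀ j : Fin m, f' x j = if (j : ℕ) = 0 then f x else 0) →
          ∀ D : ℝ, HasDistortionAtMost Set.univ f' D →
            1 + c / (Real.log (1 / ε)) ^ 2 ≤ D := by
  refine ⟨1 / 16, by norm_num, Real.exp (-2), Real.exp_pos _, fun ε hε hε₀ => ?_⟩
  have hL : 2 < Real.log (1 / ε) := by
    rw [one_div, Real.log_inv, lt_neg, ← Real.log_exp (-2)]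
    exact Real.log_lt_log hε hε₀
  have hε1 : ε ≤ 1 := hε₀.le.trans (Real.exp_le_one_iff.mpr (by norm_num))
  obtain ⟨K, hKε, hKL⟩ := exists_inv_two_pow_le_and_le_log hε hε1
  have hK : (0 : ℝ) < K := by
    rcases K with _ | K
    · norm_num at hKε; linarith
    · positivity
  set e : ℝ := (2 ^ K)⁻¹
  have he : 0 < e := by positivity
  refine ⟨{-e, 0, 1}, fun x => |x|, Set.toFinite _,
    Set.ncard_eq_three.mpr ⟨-e, 0, 1, by simp [he.ne'], by intro h; linarith, zero_ne_one, rfl⟩,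
    hasDistortionAtMost₁_abs_three_points he (by linarith) hKε, ?_⟩
  intro m _ f' hf' D ⟨μ, hμ, hdist⟩
  have hval : ∀ x ∈ ({-e, 0, 1} : Set ℝ), f' x = |x| • f' 1 := fun x hx =>
    eq_smul_of_apply_eq_ite (hf' x hx) (by simpa using hf' 1 (by simp))
  have hD := one_add_inv_sq_le_of_apply_neg_eq_smul hμ
    (fun x y => by simpa [Real.dist_eq, dist_eq_norm] using (hdist x trivial y trivial).1)
    (fun x y => by simpa [Real.dist_eq, dist_eq_norm] using (hdist x trivial y trivial).2)
    (by simpa using hval 0 (by simp)) K (by simpa [abs_of_pos he] using hval (-e) (by simp))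
  calc 1 + 1 / 16 / Real.log (1 / ε) ^ 2 = 1 + 1 / (4 * Real.log (1 / ε)) ^ 2 := by ring
    _ ≤ 1 + 1 / (K : ℝ) ^ 2 := by
        gcongr 1 + 1 / ?_
        exact pow_le_pow_left₀ hK.le (by linarith) 2
    _ ≤ D := hD
end

section
/- There exists ε₀ ∈ (0,1) such that for every ε ∈ (0, ε₀) the following holds. Let X = {0, ε, 1} ⊂ ℝ and let f : X → ℝ be given by f(0) = 0, f(ε) = −ε, f(1) = 1 (a map of distortion (1+ε)/(1−ε)). Then for every m ≥ 1, every outer extension f' : X ∪ {√ε} → ℝ^m of f (i.e., f'(x) = (f(x), 0, …, 0) for x ∈ X) has distortion at least 1 + √ε/2. -/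
section Stewart

variable {E : Type*} [NormedAddCommGroup E] [InnerProductSpace ℝ E]

theorem mul_norm_sub_sq_add_norm_add_smul_sq (y u : E) (ε : ℝ) :
    ε * ‖y - u‖ ^ 2 + ‖y + ε • u‖ ^ 2 = (1 + ε) * ‖y‖ ^ 2 + ε * (1 + ε) * ‖u‖ ^ 2 := by
  rw [norm_sub_sq_real, norm_add_sq_real, inner_smul_right, norm_smul, mul_pow, Real.norm_eq_abs,
    sq_abs]
  ring

theorem one_le_mul_one_sub_of_norm_bounds {u y : E} {ε s lam D : ℝ} (hs : 0 < s) (hsε : s ^ 2 = ε)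
    (hlam : 0 < lam) (hu : lam ≤ ‖u‖) (hy : lam * s ≤ ‖y‖)
    (hyu : ‖y - u‖ ≤ lam * D * (1 - s)) (hyεu : ‖y + ε • u‖ ≤ lam * D * (s - ε)) :
    1 ≤ D * (1 - s) := by
  have hε : 0 < ε := hsε ▸ pow_pos hs 2
  have lower : 2 * ε * (1 + ε) * lam ^ 2 ≤ ε * ‖y - u‖ ^ 2 + ‖y + ε • u‖ ^ 2 := by
    calc 2 * ε * (1 + ε) * lam ^ 2 = (1 + ε) * (lam * s) ^ 2 + ε * (1 + ε) * lam ^ 2 := by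
          rw [mul_pow, hsε]; ring
      _ ≤ (1 + ε) * ‖y‖ ^ 2 + ε * (1 + ε) * ‖u‖ ^ 2 := by gcongr
      _ = ε * ‖y - u‖ ^ 2 + ‖y + ε • u‖ ^ 2 := (mul_norm_sub_sq_add_norm_add_smul_sq y u ε).symm
  have upper : ε * ‖y - u‖ ^ 2 + ‖y + ε • u‖ ^ 2 ≤ 2 * ε * lam ^ 2 * (D * (1 - s)) ^ 2 := by
    have h1 := pow_le_pow_left₀ (norm_nonneg _) hyu 2
    have h2 := pow_le_pow_left₀ (norm_nonneg _) hyεu 2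
    calc ε * ‖y - u‖ ^ 2 + ‖y + ε • u‖ ^ 2
        ≤ ε * (lam * D * (1 - s)) ^ 2 + (lam * D * (s - ε)) ^ 2 := by gcongr
      _ = 2 * ε * lam ^ 2 * (D * (1 - s)) ^ 2 := by rw [← hsε]; ring
  have hsq : 1 ^ 2 ≤ (D * (1 - s)) ^ 2 := by
    have : 2 * ε * lam ^ 2 * 1 ^ 2 ≤ 2 * ε * lam ^ 2 * (D * (1 - s)) ^ 2 :=
      le_trans (by nlinarith [mul_pos (mul_pos hε hε) (pow_pos hlam 2)]) (lower.trans upper)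
    exact le_of_mul_le_mul_left this (by positivity)
  have hnonneg : 0 ≤ D * (1 - s) := by
    have : 0 ≤ lam * (D * (1 - s)) := by nlinarith [norm_nonneg (y - u)]
    exact nonneg_of_mul_nonneg_right (by linarith) hlam
  exact (pow_le_pow_iff_left₀ zero_le_one hnonneg two_ne_zero).1 hsq

end Stewart

theorem one_add_le_of_one_le_mul_one_sub {s D : ℝ} (hs : s < 1) (h : 1 ≤ D * (1 - s)) :
    1 + s ≤ D :=
  le_of_mul_le_mul_right (by nlinarith [sq_nonneg s]) (sub_pos.2 hs)

/-- **Lower bound for one-point extensions.** For all sufficiently small `ε`, the map sending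
`0 ↦ 0`, `ε ↦ -ε`, `1 ↦ 1` is such that every outer extension to the point `√ε` (into any
`ℝᵐ`, `m ≥ 1`) has distortion at least `1 + √ε / 2`. -/
theorem one_point_extension_lower_bound :
    ∃ ε₀ : ℝ, 0 < ε₀ ∧ ε₀ < 1 ∧ ∀ ε : ℝ, 0 < ε → ε < ε₀ →
      ∀ m : ℕ, 1 ≤ m → ∀ f' : ℝ → EuclideanSpace ℝ (Fin m),
        (∀ j : Fin m, f' 0 j = 0) →
        (∀ j : Fin m, f' ε j = if (j : ℕ) = 0 then -ε else 0) →
        (∀ j : Fin m, f' 1 j = if (j : ℕ) = 0 then 1 else 0) →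
        ∀ D : ℝ, HasDistortionAtMost {0, ε, 1, Real.sqrt ε} f' D →
          1 + Real.sqrt ε / 2 ≤ D := by
  refine ⟨1 / 2, by norm_num, by norm_num, ?_⟩
  intro ε hε hε₀ m _ f' hf0 hfε hf1 D ⟨lam, hlam, H⟩
  set s := Real.sqrt ε
  have hs : 0 < s := Real.sqrt_pos.2 hε
  have hsε : s ^ 2 = ε := Real.sq_sqrt hε.le
  have hs1 : s < 1 := (Real.sqrt_lt' one_pos).2 (by linarith)
  have hεs : ε < s := by nlinarith
  have hzero : f' 0 = 0 := by ext j; simpa using hf0 j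
  have hfε_smul : f' ε = (-ε) • f' 1 := by
    ext j; simp only [hfε, hf1, PiLp.smul_apply]; split_ifs <;> simp
  have hu : lam ≤ ‖f' 1‖ := by simpa [hzero] using (H 0 (by simp) 1 (by simp)).1
  have hy : lam * s ≤ ‖f' s‖ := by simpa [hzero, abs_of_pos hs] using (H s (by simp) 0 (by simp)).1
  have hyu : ‖f' s - f' 1‖ ≤ lam * D * (1 - s) := by
    simpa [abs_of_neg (sub_neg.2 hs1)] using (H s (by simp) 1 (by simp)).2
  have hyεu : ‖f' s + ε • f' 1‖ ≤ lam * D * (s - ε) := by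
    simpa [hfε_smul, abs_of_pos (sub_pos.2 hεs)] using (H s (by simp) ε (by simp)).2
  have := one_add_le_of_one_le_mul_one_sub hs1
    (one_le_mul_one_sub_of_norm_bounds hs hsε hlam hu hy hyu hyεu)
  linarith
end
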